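/- Let q be a real number with q > 0 and q ≠ 1, and let n ≥ 0. Suppose W(x,y) = Σ_{i=0}^n A_i x^{2(n−i)+1} y^{2i} ∈ ℂ[x,y] (a homogeneous polynomial of odd degree 2n+1 in which only even powers of y occur) with A₀ = 1 is σ_q-invariant. Then for every ν = 0, 1, …, 2n+1: Σ_{i=0}^{⌊(2n+1−ν)/2⌋} C(2n+1−2i, ν)·A_i − q^{n−ν+1/2}·Σ_{i=0}^{⌊ν/2⌋} C(2n+1−2i, 2n+1−ν)·A_i = 0. -/

import Mathlib

/-!
Evaluate the invariance `W^{σ_q} = W` at `(x, y) = (1 + t, 1)`. Since `W` is homogeneous of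
degree `2n+1`, the factor `1/√q` comes out and one gets the identity
`∑ A_i (t + q)^{2(n-i)+1} t^{2i} = q^{n+1/2} ∑ A_i (1 + t)^{2(n-i)+1}` in `ℂ[t]`.
The coefficient of `t^ν` is `q^{2n+1-ν} ∑ C(2n+1-2i, 2n+1-ν) A_i` on the left and
`q^{n+1/2} ∑ C(2n+1-2i, ν) A_i` on the right.
-/

noncomputable section

abbrev Cxy : Type := MvPolynomial (Fin 2) ℂ

/-- The action of `σ_q = (1/√q)[[1,q-1],[1,-1]]`: substitute
`x ↦ (x+(q-1)y)/√q`, `y ↦ (x-y)/√q`. -/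
def actSigma (q : ℝ) (f : Cxy) : Cxy :=
  MvPolynomial.aeval
    ![MvPolynomial.C ((Real.sqrt q : ℂ))⁻¹ *
        (MvPolynomial.X 0 + MvPolynomial.C ((q : ℂ) - 1) * MvPolynomial.X 1),
      MvPolynomial.C ((Real.sqrt q : ℂ))⁻¹ * (MvPolynomial.X 0 - MvPolynomial.X 1)] f

open MvPolynomial in
theorem MvPolynomial.IsHomogeneous.aeval_smul {σ R S : Type*} [CommSemiring R] [CommSemiring S]
    [Algebra R S] {φ : MvPolynomial σ R} {m : ℕ} (hφ : φ.IsHomogeneous m) (c : S) (g : σ → S) :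
    MvPolynomial.aeval (c • g) φ = c ^ m * MvPolynomial.aeval g φ := by
  conv_lhs => rw [φ.as_sum]
  conv_rhs => rw [φ.as_sum]
  simp only [map_sum, Finset.mul_sum, aeval_monomial]
  refine Finset.sum_congr rfl fun d hd => ?_
  have hdeg : d.degree = m := by
    rw [Finsupp.degree_eq_weight_one]
    exact hφ (mem_support_iff.mp hd)
  have hc : d.prod (fun _ k => c ^ k) = c ^ m := by
    rw [Finsupp.prod, Finset.prod_pow_eq_pow_sum, ← Finsupp.degree_apply, hdeg]
  simp only [Pi.smul_apply, smul_eq_mul, mul_pow, Finsupp.prod_mul, hc]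
  ring

open Polynomial

theorem aeval_actSigma {S : Type*} [CommRing S] [Algebra ℂ S] (q : ℝ) (f : Cxy) (v : Fin 2 → S) :
    MvPolynomial.aeval v (actSigma q f) = MvPolynomial.aeval
      ![((Real.sqrt q : ℂ))⁻¹ • (v 0 + ((q : ℂ) - 1) • v 1),
        ((Real.sqrt q : ℂ))⁻¹ • (v 0 - v 1)] f := by
  rw [actSigma, MvPolynomial.aeval_eq_bind₁, MvPolynomial.aeval_bind₁]
  congr 2
  funext i
  fin_cases i <;> simp [Algebra.smul_def]

theorem aeval_X_add_C_X_of_actSigma_eq {q : ℝ} (hq : 0 < q) {f : Cxy} {m : ℕ}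
    (hf : f.IsHomogeneous m) (hinv : actSigma q f = f) :
    MvPolynomial.aeval ![X + C (q : ℂ), X] f
      = C ((Real.sqrt q : ℂ) ^ m) * MvPolynomial.aeval ![X + 1, 1] f := by
  have hs : (Real.sqrt q : ℂ) ≠ 0 := Complex.ofReal_ne_zero.mpr (Real.sqrt_pos.mpr hq).ne'
  have hpoint : ![(Real.sqrt q : ℂ)⁻¹ • ((X + 1 : ℂ[X]) + ((q : ℂ) - 1) • 1),
      (Real.sqrt q : ℂ)⁻¹ • ((X + 1 : ℂ[X]) - 1)]
      = C (Real.sqrt q : ℂ)⁻¹ • ![X + C (q : ℂ), X] := by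
    funext i
    fin_cases i
    · simp [smul_eq_C_mul]
      ring
    · simp [smul_eq_C_mul]
  have h := congrArg (MvPolynomial.aeval ![(X + 1 : ℂ[X]), 1]) hinv
  simp only [aeval_actSigma, Matrix.cons_val_zero, Matrix.cons_val_one] at h
  rw [hpoint, hf.aeval_smul] at h
  rw [← h, ← mul_assoc, ← C_pow, ← C_mul, ← mul_pow, mul_inv_cancel₀ hs, one_pow, C_1, one_mul]

def oddForm (n : ℕ) (A : ℕ → ℂ) : Cxy :=
  ∑ i ∈ Finset.range (n + 1),
    MvPolynomial.C (A i) * MvPolynomial.X 0 ^ (2 * (n - i) + 1) * MvPolynomial.X 1 ^ (2 * i)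

def binomMoment (n : ℕ) (A : ℕ → ℂ) (k : ℕ) : ℂ :=
  ∑ i ∈ Finset.range (n + 1), ((2 * n + 1 - 2 * i).choose k : ℂ) * A i

theorem isHomogeneous_oddForm (n : ℕ) (A : ℕ → ℂ) : (oddForm n A).IsHomogeneous (2 * n + 1) := by
  refine MvPolynomial.IsHomogeneous.sum _ _ _ fun i hi => ?_
  have hdeg : 2 * (n - i) + 1 + 2 * i = 2 * n + 1 := by
    have := Finset.mem_range.mp hi
    omega
  rw [← hdeg]
  exact (MvPolynomial.isHomogeneous_C_mul_X_pow _ _ _).mul (MvPolynomial.isHomogeneous_X_pow _ _)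

theorem coeff_aeval_X_add_one_one_oddForm (n : ℕ) (A : ℕ → ℂ) (ν : ℕ) :
    (MvPolynomial.aeval ![X + 1, 1] (oddForm n A)).coeff ν = binomMoment n A ν := by
  simp only [oddForm, binomMoment, map_sum, map_mul, map_pow, MvPolynomial.aeval_C,
    MvPolynomial.aeval_X, finsetSum_coeff]
  refine Finset.sum_congr rfl fun i hi => ?_
  have hk : 2 * (n - i) + 1 = 2 * n + 1 - 2 * i := by
    have := Finset.mem_range.mp hi
    omega
  simp only [Matrix.cons_val_zero, Matrix.cons_val_one, algebraMap_eq, one_pow, mul_one,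
    coeff_C_mul, coeff_X_add_one_pow, hk]
  ring

theorem coeff_aeval_X_add_C_X_oddForm (n : ℕ) (A : ℕ → ℂ) (a : ℂ) {ν : ℕ} (hν : ν ≤ 2 * n + 1) :
    (MvPolynomial.aeval ![X + C a, X] (oddForm n A)).coeff ν
      = a ^ (2 * n + 1 - ν) * binomMoment n A (2 * n + 1 - ν) := by
  simp only [oddForm, binomMoment, map_sum, map_mul, map_pow, MvPolynomial.aeval_C,
    MvPolynomial.aeval_X, finsetSum_coeff, Finset.mul_sum]
  refine Finset.sum_congr rfl fun i hi => ?_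
  have hi : i ≤ n := Nat.lt_succ_iff.mp (Finset.mem_range.mp hi)
  simp only [Matrix.cons_val_zero, Matrix.cons_val_one, algebraMap_eq, coeff_C_mul,
    coeff_mul_X_pow']
  split_ifs with h2i
  · rw [coeff_X_add_C_pow, ← Nat.choose_symm (by omega : ν - 2 * i ≤ 2 * (n - i) + 1),
      show 2 * (n - i) + 1 - (ν - 2 * i) = 2 * n + 1 - ν by omega,
      show 2 * (n - i) + 1 = 2 * n + 1 - 2 * i by omega]
    ring
  · rw [Nat.choose_eq_zero_of_lt (by omega : 2 * n + 1 - 2 * i < 2 * n + 1 - ν)]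
    simp

theorem sum_range_choose_eq_binomMoment (n : ℕ) (A : ℕ → ℂ) {k : ℕ} (hk : k ≤ 2 * n + 1) :
    ∑ i ∈ Finset.range ((2 * n + 1 - k) / 2 + 1), ((2 * n + 1 - 2 * i).choose k : ℂ) * A i
      = binomMoment n A k := by
  refine Finset.sum_subset (fun i hi => ?_) (fun i hin hi => ?_)
  · simp only [Finset.mem_range] at hi ⊢
    omega
  · rw [Finset.mem_range] at hin hi
    rw [Nat.choose_eq_zero_of_lt (by omega), Nat.cast_zero, zero_mul]

theorem rpow_mul_sqrt_pow {q : ℝ} (hq : 0 < q) {n ν : ℕ} (hν : ν ≤ 2 * n + 1) :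
    q ^ ((n : ℝ) - ν + 1 / 2) * Real.sqrt q ^ (2 * n + 1) = q ^ (2 * n + 1 - ν) := by
  rw [Real.sqrt_eq_rpow, ← Real.rpow_natCast _ (2 * n + 1), ← Real.rpow_mul hq.le,
    ← Real.rpow_add hq, ← Real.rpow_natCast, Nat.cast_sub hν]
  push_cast
  ring_nf

theorem binomMoment_eq_of_actSigma_eq {q : ℝ} (hq : 0 < q) {n : ℕ} {A : ℕ → ℂ}
    (hinv : actSigma q (oddForm n A) = oddForm n A) {ν : ℕ} (hν : ν ≤ 2 * n + 1) :
    binomMoment n A ν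
      = ((q ^ ((n : ℝ) - ν + 1 / 2) : ℝ) : ℂ) * binomMoment n A (2 * n + 1 - ν) := by
  have h := congrArg (coeff · ν)
    (aeval_X_add_C_X_of_actSigma_eq hq (isHomogeneous_oddForm n A) hinv)
  simp only [coeff_C_mul, coeff_aeval_X_add_C_X_oddForm _ _ _ hν,
    coeff_aeval_X_add_one_one_oddForm] at h
  have hpow : (q : ℂ) ^ (2 * n + 1 - ν)
      = ((q ^ ((n : ℝ) - ν + 1 / 2) : ℝ) : ℂ) * (Real.sqrt q : ℂ) ^ (2 * n + 1) := by
    exact_mod_cast (rpow_mul_sqrt_pow hq hν).symm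
  have hs : (Real.sqrt q : ℂ) ^ (2 * n + 1) ≠ 0 :=
    pow_ne_zero _ (Complex.ofReal_ne_zero.mpr (Real.sqrt_pos.mpr hq).ne')
  refine mul_left_cancel₀ hs ?_
  linear_combination -h + binomMoment n A (2 * n + 1 - ν) * hpow

theorem binomial_moments_odd_div2_general (q : ℝ) (hq0 : 0 < q) (n : ℕ)
    (A : ℕ → ℂ) (W : Cxy)
    (hW : W = ∑ i ∈ Finset.range (n + 1),
      MvPolynomial.C (A i) * MvPolynomial.X 0 ^ (2 * (n - i) + 1) * MvPolynomial.X 1 ^ (2 * i))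
    (hinv : actSigma q W = W) :
    ∀ ν ≤ 2 * n + 1,
      ∑ i ∈ Finset.range ((2 * n + 1 - ν) / 2 + 1), ((2 * n + 1 - 2 * i).choose ν : ℂ) * A i
        - ((q ^ ((n : ℝ) - (ν : ℝ) + 1 / 2) : ℝ) : ℂ) *
            ∑ i ∈ Finset.range (ν / 2 + 1), ((2 * n + 1 - 2 * i).choose (2 * n + 1 - ν) : ℂ) * A i
        = 0 := by
  intro ν hν
  obtain rfl : W = oddForm n A := hW
  have hdual : ν / 2 = (2 * n + 1 - (2 * n + 1 - ν)) / 2 := by rw [Nat.sub_sub_self hν]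
  rw [sum_range_choose_eq_binomMoment n A hν, hdual,
    sum_range_choose_eq_binomMoment n A (Nat.sub_le _ _),
    binomMoment_eq_of_actSigma_eq hq0 hinv hν, sub_self]

theorem binomial_moments_odd_div2 (q : ℝ) (hq0 : 0 < q) (hq1 : q ≠ 1) (n : ℕ)
    (A : ℕ → ℂ) (hA0 : A 0 = 1) (W : Cxy)
    (hW : W = ∑ i ∈ Finset.range (n + 1),
      MvPolynomial.C (A i) * MvPolynomial.X 0 ^ (2 * (n - i) + 1) * MvPolynomial.X 1 ^ (2 * i))
    (hinv : actSigma q W = W) :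
    ∀ ν ≤ 2 * n + 1,
      ∑ i ∈ Finset.range ((2 * n + 1 - ν) / 2 + 1), ((2 * n + 1 - 2 * i).choose ν : ℂ) * A i
        - ((q ^ ((n : ℝ) - (ν : ℝ) + 1 / 2) : ℝ) : ℂ) *
            ∑ i ∈ Finset.range (ν / 2 + 1), ((2 * n + 1 - 2 * i).choose (2 * n + 1 - ν) : ℂ) * A i
        = 0 :=
  binomial_moments_odd_div2_general q hq0 n A W hW hinv

end
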